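/- arXiv:2209.03477 — 3 statements merged into one kernel-verified Lean document; each statement's English description precedes it below -/
import Mathlib

section
/- Let D = ⊕_{i<k} C_i ⊕ N be a countable direct sum of chains, with k > 0, where each C_i is a chain with exactly ℵ₀ siblings up to isomorphism, and N is a direct sum of chains with only finitely many non-trivial components each having exactly one sibling. Then D has exactly ℵ₀ siblings up to isomorphism. -/
open Cardinal

/-- Two preorders are equimorphic (siblings) if each order-embeds into the other. -/
def Equimorphic (α : Type*) (β : Type*) [Preorder α] [Preorder β] : Prop :=
  Nonempty (α ↪o β) ∧ Nonempty (β ↪o α)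

/-- The setoid identifying order-isomorphic equimorphic substructures. -/
def sibSetoid (α : Type*) [Preorder α] : Setoid {S : Set α // Equimorphic S α} :=
  ⟨fun S T => Nonempty ((S : Set α) ≃o (T : Set α)),
    ⟨fun _ => ⟨OrderIso.refl _⟩, fun ⟨e⟩ => ⟨e.symm⟩, fun ⟨e⟩ ⟨f⟩ => ⟨e.trans f⟩⟩⟩

/-- The sibling number of a structure: the number of isomorphism classes of
substructures equimorphic to it (every sibling is isomorphic to such a substructure). -/
noncomputable def sibNumber (α : Type*) [Preorder α] : Cardinal :=
  #(Quotient (sibSetoid α))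

/-!
An order embedding between sums of nonempty chains sends each component into a single component,
injectively on indices. Let `D = Σ i, A i` have only finitely many nontrivial components and let
`S` be a sibling of `D`. The index maps of `D ↪ S ↪ D` restrict to bijections between the
nontrivial components, their composite is a permutation, and going once around its cycles shows
that matched components are siblings; the trivial components are matched by Schröder–Bernstein.
So `S` is determined up to isomorphism by a choice of a sibling of each nontrivial component,
and `sib D ≤ ∏ sib (A i) ≤ ℵ₀`.

Conversely, replacing a nontrivial component `A i₀` by its siblings `T` gives pairwise
non-isomorphic siblings of `D`: an isomorphism between the sums obtained from `T` and `T'`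
permutes the components, and counting on both sides the finitely many components isomorphic to
`T` forces `T ≃o T'`. So `ℵ₀ = sib (A i₀) ≤ sib D`.
-/

open Function Set

universe u v

section Combinatorics

variable {ι κ : Type*}

theorem Function.Surjective.of_sigma_map_left {A : ι → Type*} {B : κ → Type*}
    [∀ k, Nonempty (B k)] {f₁ : ι → κ} {f₂ : ∀ i, A i → B (f₁ i)}
    (h : Surjective (Sigma.map f₁ f₂)) : Surjective f₁ := fun k =>
  let ⟨p, hp⟩ := h ⟨k, Classical.arbitrary _⟩
  ⟨p.1, congrArg Sigma.fst hp⟩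

theorem Function.Surjective.of_sigma_map_right {A : ι → Type*} {B : κ → Type*}
    {f₁ : ι → κ} {f₂ : ∀ i, A i → B (f₁ i)} (h₁ : Injective f₁)
    (h : Surjective (Sigma.map f₁ f₂)) (i : ι) : Surjective (f₂ i) := by
  intro y
  obtain ⟨⟨i', x⟩, hx⟩ := h ⟨f₁ i, y⟩
  obtain ⟨hi, hxy⟩ := Sigma.mk.inj_iff.1 hx
  obtain rfl := h₁ hi
  exact ⟨x, eq_of_heq hxy⟩

theorem bijective_subtypeMap_of_injective {P : ι → Prop} {Q : κ → Prop} [Finite {i // P i}]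
    {τ : ι → κ} {σ : κ → ι} (hτ : Injective τ) (hσ : Injective σ)
    (hτPQ : ∀ i, P i → Q (τ i)) (hσQP : ∀ k, Q k → P (σ k)) :
    Bijective (Subtype.map τ hτPQ) :=
  have hσ' := Subtype.map_injective hσQP hσ
  have : Finite {k // Q k} := Finite.of_injective _ hσ'
  (Subtype.map_injective hτPQ hτ).bijective_of_nat_card_le (Nat.card_le_card_of_injective _ hσ')

theorem not_apply_of_bijective_subtypeMap {P : ι → Prop} {Q : κ → Prop} {τ : ι → κ}
    (hτ : Injective τ) {hτPQ : ∀ i, P i → Q (τ i)} (h : Bijective (Subtype.map τ hτPQ))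
    {i : ι} (hi : ¬P i) : ¬Q (τ i) := fun hq => by
  obtain ⟨j, hj⟩ := h.2 ⟨τ i, hq⟩
  exact hi (hτ (congrArg Subtype.val hj) ▸ j.2)

/-- By finiteness `τ` restricts to a bijection from `P` onto `Q`; off `P` and `Q` apply
Schröder–Bernstein. -/
theorem exists_equiv_eq_of_injective {P : ι → Prop} {Q : κ → Prop} (hP : {i | P i}.Finite)
    {τ : ι → κ} {σ : κ → ι} (hτ : Injective τ) (hσ : Injective σ)
    (hτPQ : ∀ i, P i → Q (τ i)) (hσQP : ∀ k, Q k → P (σ k)) :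
    ∃ G : ι ≃ κ, (∀ i, P i → G i = τ i) ∧ ∀ i, ¬P i → ¬Q (G i) := by
  classical
  have : Finite {i // P i} := hP
  have hτ' := bijective_subtypeMap_of_injective hτ hσ hτPQ hσQP
  have : Finite {k // Q k} := Finite.of_injective _ (Subtype.map_injective hσQP hσ)
  have hσ' := bijective_subtypeMap_of_injective hσ hτ hσQP hτPQ
  obtain ⟨e⟩ := Embedding.antisymm
    ⟨Subtype.map τ fun _ => not_apply_of_bijective_subtypeMap hτ hτ',
      Subtype.map_injective _ hτ⟩
    (⟨Subtype.map σ fun _ => not_apply_of_bijective_subtypeMap hσ hσ',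
      Subtype.map_injective _ hσ⟩ : {k // ¬Q k} ↪ {i // ¬P i})
  refine ⟨(Equiv.sumCompl P).symm.trans
    (((Equiv.ofBijective _ hτ').sumCongr e).trans (Equiv.sumCompl Q)), fun i hi => ?_,
    fun i hi => ?_⟩
  · simp [Equiv.sumCompl_symm_apply_of_pos hi]
  · simpa [Equiv.sumCompl_symm_apply_of_neg hi] using (e ⟨i, hi⟩).2

end Combinatorics

section Equimorphic

variable {α β γ : Type*} [Preorder α] [Preorder β] [Preorder γ]

theorem Equimorphic.symm (h : Equimorphic α β) : Equimorphic β α := ⟨h.2, h.1⟩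

theorem Equimorphic.trans (h : Equimorphic α β) (h' : Equimorphic β γ) : Equimorphic α γ :=
  ⟨⟨h.1.some.trans h'.1.some⟩, ⟨h'.2.some.trans h.2.some⟩⟩

theorem OrderIso.equimorphic (e : α ≃o β) : Equimorphic α β :=
  ⟨⟨e.toOrderEmbedding⟩, ⟨e.symm.toOrderEmbedding⟩⟩

theorem nonempty_orderIso_of_subsingleton [Subsingleton α] [Subsingleton β] [Nonempty α]
    [Nonempty β] : Nonempty (α ≃o β) := by
  inhabit α
  inhabit β
  exact ⟨@OrderIso.ofUnique α β (Unique.mk' α) (Unique.mk' β) _ _⟩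

theorem exists_subset_equimorphic_orderIso (h : Equimorphic β α) :
    ∃ T : {S : Set α // Equimorphic S α}, Nonempty (T.1 ≃o β) := by
  obtain ⟨⟨f⟩, ⟨g⟩⟩ := h
  let e : β ≃o range f := OrderEmbedding.orderIso
  exact ⟨⟨range f, ⟨OrderEmbedding.subtype _⟩, ⟨g.trans e⟩⟩, ⟨e.symm⟩⟩

theorem nontrivial_of_aleph0_le_sibNumber (h : ℵ₀ ≤ sibNumber α) : Nontrivial α := by
  by_contra hα
  have := not_nontrivial_iff_subsingleton.1 hα
  exact (mk_lt_aleph0 (α := Quotient (sibSetoid α))).not_ge h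

end Equimorphic

section Permutations

variable {ι : Type*} {B B' : ι → Type*} [∀ i, Preorder (B i)] [∀ i, Preorder (B' i)]

/-- Compose the given embeddings once around the cycle of `π` through `i`. -/
theorem nonempty_orderEmbedding_of_perm [Finite ι] (π : Equiv.Perm ι)
    (h : ∀ i, Nonempty (B i ↪o B (π i))) (i : ι) : Nonempty (B (π i) ↪o B i) := by
  have hpow : ∀ n i, Nonempty (B i ↪o B ((π ^ n) i)) := by
    intro n
    induction n with
    | zero => exact fun i => ⟨RelEmbedding.refl _⟩
    | succ n ih =>
      intro i
      rw [pow_succ', Equiv.Perm.mul_apply]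
      exact ⟨(ih i).some.trans (h _).some⟩
  have := hpow (orderOf π - 1) (π i)
  rwa [← Equiv.Perm.mul_apply, pow_sub_one_mul (orderOf_pos π).ne', pow_orderOf_eq_one,
    Equiv.Perm.one_apply] at this

theorem nonempty_orderIso_of_perm (g : Equiv.Perm ι) (hg : ∀ i, Nonempty (B i ≃o B' (g i)))
    {i₀ : ι} (hne : ∀ i ≠ i₀, Nonempty (B i ≃o B' i))
    (hfin : {i | Nonempty (B i ≃o B i₀)}.Finite) : Nonempty (B i₀ ≃o B' i₀) := by
  -- Otherwise `g` maps the finite set `X` of `i` with `B i ≃o B i₀` onto `X \ {i₀}`.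
  by_contra h₀
  set X := {i | Nonempty (B i ≃o B i₀)}
  have hX : g ⁻¹' {i | Nonempty (B' i ≃o B i₀)} = X := by
    ext i
    obtain ⟨e⟩ := hg i
    exact ⟨fun ⟨f⟩ => ⟨e.trans f⟩, fun ⟨f⟩ => ⟨e.symm.trans f⟩⟩
  have hY : {i | Nonempty (B' i ≃o B i₀)} = X \ {i₀} := by
    ext i
    rcases eq_or_ne i i₀ with rfl | hi
    · simpa using ⟨fun (e : B' i ≃o B i) => h₀ ⟨e.symm⟩⟩
    · obtain ⟨e⟩ := hne i hi
      simpa [hi, X] using ⟨fun ⟨f⟩ => ⟨e.trans f⟩, fun ⟨f⟩ => ⟨e.symm.trans f⟩⟩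
  have hi₀ : i₀ ∈ X := ⟨OrderIso.refl _⟩
  have := ncard_lt_ncard (sdiff_singleton_ssubset.2 hi₀) hfin
  rw [← hY, ← hX, ncard_preimage_of_injective_subset_range g.injective (by simp)] at this
  exact this.ne rfl

end Permutations

theorem Cardinal.prod_le_aleph0 {ι : Type*} [Finite ι] {f : ι → Cardinal}
    (h : ∀ i, f i ≤ ℵ₀) : prod f ≤ ℵ₀ := by
  have : ∀ i, Countable (f i).out := fun i => mk_le_aleph0_iff.1 (by rw [mk_out]; exact h i)
  calc prod f = prod fun i => #(f i).out := by simp only [mk_out]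
    _ = #(∀ i, (f i).out) := (mk_pi _).symm
    _ ≤ ℵ₀ := mk_le_aleph0

section SigmaOrder

variable {ι κ : Type*} {A : ι → Type*} {B : κ → Type*}

theorem Sigma.fst_eq_iff_le_or_le [∀ i, LinearOrder (A i)] {p q : Σ i, A i} :
    p.1 = q.1 ↔ p ≤ q ∨ q ≤ p := by
  obtain ⟨i, a⟩ := p
  obtain ⟨j, b⟩ := q
  constructor
  · rintro (rfl : i = j)
    simpa only [Sigma.mk_le_mk_iff] using le_total a b
  · rintro (h | h)
    exacts [(Sigma.le_def.1 h).1, (Sigma.le_def.1 h).1.symm]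

variable [∀ i, Preorder (A i)] [∀ k, Preorder (B k)]

def OrderEmbedding.sigmaMap (g : ι → κ) (hg : Injective g) (e : ∀ i, A i ↪o B (g i)) :
    (Σ i, A i) ↪o Σ k, B k where
  toFun := Sigma.map g fun i => e i
  inj' := hg.sigma_map fun i => (e i).injective
  map_rel_iff' := by
    rintro ⟨i, a⟩ ⟨j, b⟩
    constructor <;> intro h
    · obtain rfl : i = j := hg (Sigma.le_def.1 h).1
      simpa only [Embedding.coeFn_mk, Sigma.map_mk, Sigma.mk_le_mk_iff, le_iff_le] using h
    · obtain rfl : i = j := (Sigma.le_def.1 h).1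
      simpa only [Embedding.coeFn_mk, Sigma.map_mk, Sigma.mk_le_mk_iff, le_iff_le] using h

noncomputable def OrderIso.sigmaCongr (g : ι ≃ κ) (e : ∀ i, A i ≃o B (g i)) :
    (Σ i, A i) ≃o Σ k, B k :=
  RelIso.ofSurjective (OrderEmbedding.sigmaMap g g.injective fun i => (e i).toOrderEmbedding)
    (g.surjective.sigma_map fun i => (e i).surjective)

def Set.univSigmaOrderIso (u : ∀ i, Set (A i)) : univ.sigma u ≃o Σ i, u i where
  toFun p := ⟨p.1.1, p.1.2, p.2.2⟩
  invFun q := ⟨⟨q.1, q.2⟩, mem_univ _, q.2.2⟩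
  left_inv _ := rfl
  right_inv _ := rfl
  map_rel_iff' := by
    rintro ⟨⟨i, a⟩, ha⟩ ⟨⟨j, b⟩, hb⟩
    constructor <;> intro h <;> obtain rfl : i = j := (Sigma.le_def.1 h).1 <;>
      simpa only [Equiv.coe_fn_mk, Sigma.mk_le_mk_iff, Subtype.mk_le_mk] using h

def Set.sigmaFiberOrderIso (S : Set (Σ i, A i)) :
    S ≃o Σ i : {i // (Sigma.mk i ⁻¹' S).Nonempty}, Sigma.mk i.1 ⁻¹' S where
  toFun p := ⟨⟨p.1.1, p.1.2, p.2⟩, p.1.2, p.2⟩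
  invFun q := ⟨⟨q.1, q.2⟩, q.2.2⟩
  left_inv _ := rfl
  right_inv _ := rfl
  map_rel_iff' := by
    rintro ⟨⟨i, a⟩, ha⟩ ⟨⟨j, b⟩, hb⟩
    constructor <;> intro h
    · obtain rfl : i = j := congrArg Subtype.val (Sigma.le_def.1 h).1
      simpa only [Equiv.coe_fn_mk, Sigma.mk_le_mk_iff, Subtype.mk_le_mk] using h
    · obtain rfl : i = j := (Sigma.le_def.1 h).1
      simpa only [Equiv.coe_fn_mk, Sigma.mk_le_mk_iff, Subtype.mk_le_mk] using h

theorem equimorphic_univ_sigma {u : ∀ i, Set (A i)} (h : ∀ i, Nonempty (A i ↪o u i)) :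
    Equimorphic (univ.sigma u) (Σ i, A i) :=
  ⟨⟨OrderEmbedding.subtype _⟩,
    ⟨(OrderEmbedding.sigmaMap id injective_id fun i => (h i).some).trans
      (univSigmaOrderIso u).symm.toOrderEmbedding⟩⟩

theorem nonempty_orderIso_univ_sigma {u v : ∀ i, Set (A i)} (h : ∀ i, Nonempty (u i ≃o v i)) :
    Nonempty (univ.sigma u ≃o univ.sigma v) :=
  ⟨(univSigmaOrderIso u).trans
    ((OrderIso.sigmaCongr (Equiv.refl ι) fun i => (h i).some).trans (univSigmaOrderIso v).symm)⟩

end SigmaOrder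

section Chains

variable {ι κ : Type*} {A : ι → Type*} {B : κ → Type*}
  [∀ i, LinearOrder (A i)] [∀ k, LinearOrder (B k)]

theorem OrderEmbedding.fst_apply_eq_fst_apply_iff (f : (Σ i, A i) ↪o Σ k, B k)
    {p q : Σ i, A i} : (f p).1 = (f q).1 ↔ p.1 = q.1 := by
  simp only [Sigma.fst_eq_iff_le_or_le, f.le_iff_le]

variable [∀ i, Nonempty (A i)]

theorem OrderEmbedding.exists_eq_sigmaMap (f : (Σ i, A i) ↪o Σ k, B k) :
    ∃ (g : ι → κ) (hg : Injective g) (e : ∀ i, A i ↪o B (g i)), f = sigmaMap g hg e := by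
  let g i := (f ⟨i, Classical.arbitrary _⟩).1
  have hfst i x : (f ⟨i, x⟩).1 = g i := f.fst_apply_eq_fst_apply_iff.2 rfl
  let e₀ i (x : A i) : B (g i) := cast (congrArg B (hfst i x)) (f ⟨i, x⟩).2
  have he₀ i x : f ⟨i, x⟩ = ⟨g i, e₀ i x⟩ := Sigma.ext (hfst i x) (cast_heq _ _).symm
  let e i : A i ↪o B (g i) := OrderEmbedding.ofMapLEIff (e₀ i) fun x y => by
    rw [← Sigma.mk_le_mk_iff (i := g i), ← he₀, ← he₀, f.le_iff_le, Sigma.mk_le_mk_iff]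
  exact ⟨g, fun i j h => f.fst_apply_eq_fst_apply_iff.1 h, e,
    DFunLike.ext _ _ fun ⟨i, x⟩ => he₀ i x⟩

theorem OrderIso.exists_equiv_forall_nonempty_orderIso [∀ k, Nonempty (B k)]
    (f : (Σ i, A i) ≃o Σ k, B k) : ∃ g : ι ≃ κ, ∀ i, Nonempty (A i ≃o B (g i)) := by
  obtain ⟨g, hg, e, hf⟩ := f.toOrderEmbedding.exists_eq_sigmaMap
  have hsurj : Surjective (Sigma.map g fun i => e i) := by
    change Surjective (OrderEmbedding.sigmaMap g hg e)
    rw [← hf]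
    exact f.surjective
  exact ⟨Equiv.ofBijective g ⟨hg, hsurj.of_sigma_map_left⟩,
    fun i => ⟨RelIso.ofSurjective (e i) (hsurj.of_sigma_map_right hg i)⟩⟩

theorem exists_equiv_forall_equimorphic [∀ k, Nonempty (B k)]
    (hfin : {i | Nontrivial (A i)}.Finite) (h : Equimorphic (Σ i, A i) (Σ k, B k)) :
    ∃ G : ι ≃ κ, ∀ i, Equimorphic (A i) (B (G i)) := by
  obtain ⟨τ, hτ, eτ, -⟩ := h.1.some.exists_eq_sigmaMap
  obtain ⟨σ, hσ, eσ, -⟩ := h.2.some.exists_eq_sigmaMap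
  have hτN i (_ : Nontrivial (A i)) : Nontrivial (B (τ i)) := (eτ i).injective.nontrivial
  have hσN k (_ : Nontrivial (B k)) : Nontrivial (A (σ k)) := (eσ k).injective.nontrivial
  obtain ⟨G, hGτ, hGN⟩ := exists_equiv_eq_of_injective hfin hτ hσ hτN hσN
  have : Finite {i // Nontrivial (A i)} := hfin
  have hπ : Bijective (Subtype.map (σ ∘ τ) fun i hi => hσN _ (hτN i hi)) :=
    Finite.injective_iff_bijective.1 (Subtype.map_injective _ (hσ.comp hτ))
  have hback := nonempty_orderEmbedding_of_perm (B := fun i : {i // Nontrivial (A i)} => A i)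
    (Equiv.ofBijective _ hπ) fun i => ⟨(eτ i).trans (eσ (τ i))⟩
  refine ⟨G, fun i => ?_⟩
  by_cases hi : Nontrivial (A i)
  · rw [hGτ i hi]
    exact ⟨⟨eτ i⟩, ⟨(eσ (τ i)).trans (hback ⟨i, hi⟩).some⟩⟩
  · have := not_nontrivial_iff_subsingleton.1 hi
    have := not_nontrivial_iff_subsingleton.1 (hGN i hi)
    exact nonempty_orderIso_of_subsingleton.some.equimorphic

end Chains

section ExtendUniv

variable {ι : Type*} {A : ι → Type*}

open Classical in
def extendUniv (T : ∀ i : {i // Nontrivial (A i)}, Set (A i)) (i : ι) : Set (A i) :=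
  if h : Nontrivial (A i) then T ⟨i, h⟩ else univ

theorem extendUniv_of_nontrivial (T : ∀ i : {i // Nontrivial (A i)}, Set (A i)) {i : ι}
    (hi : Nontrivial (A i)) : extendUniv T i = T ⟨i, hi⟩ :=
  dif_pos hi

theorem extendUniv_of_not_nontrivial (T : ∀ i : {i // Nontrivial (A i)}, Set (A i)) {i : ι}
    (hi : ¬Nontrivial (A i)) : extendUniv T i = Set.univ :=
  dif_neg hi

variable [∀ i, Preorder (A i)]

theorem nonempty_orderEmbedding_extendUniv
    (T : ∀ i : {i // Nontrivial (A i)}, {T : Set (A i) // Equimorphic T (A i)}) (i : ι) :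
    Nonempty (A i ↪o extendUniv (fun i => (T i).1) i) := by
  by_cases hi : Nontrivial (A i)
  · rw [extendUniv_of_nontrivial _ hi]
    exact (T ⟨i, hi⟩).2.2
  · rw [extendUniv_of_not_nontrivial _ hi]
    exact ⟨OrderIso.Set.univ.symm.toOrderEmbedding⟩

theorem nonempty_orderIso_extendUniv {T T' : ∀ i : {i // Nontrivial (A i)}, Set (A i)}
    (h : ∀ i, Nonempty (T i ≃o T' i)) (i : ι) :
    Nonempty (extendUniv T i ≃o extendUniv T' i) := by
  by_cases hi : Nontrivial (A i)
  · rw [extendUniv_of_nontrivial _ hi, extendUniv_of_nontrivial _ hi]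
    exact h _
  · rw [extendUniv_of_not_nontrivial _ hi, extendUniv_of_not_nontrivial _ hi]
    exact ⟨OrderIso.refl _⟩

end ExtendUniv

section UpdateUniv

variable {ι : Type*} [DecidableEq ι] {A : ι → Type*} [∀ i, Preorder (A i)] {i₀ : ι}

theorem nonempty_orderEmbedding_update_univ {T : Set (A i₀)} (h : Nonempty (A i₀ ↪o T))
    (i : ι) : Nonempty (A i ↪o update (fun _ => Set.univ) i₀ T i) := by
  rcases eq_or_ne i i₀ with rfl | hi
  · rwa [update_self]
  · rw [update_of_ne hi]
    exact ⟨OrderIso.Set.univ.symm.toOrderEmbedding⟩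

theorem nonempty_orderIso_update_univ {T T' : Set (A i₀)} (h : Nonempty (T ≃o T')) (i : ι) :
    Nonempty (update (fun _ => Set.univ) i₀ T i ≃o update (fun _ => Set.univ) i₀ T' i) := by
  rcases eq_or_ne i i₀ with rfl | hi
  · rwa [update_self, update_self]
  · rw [update_of_ne hi, update_of_ne hi]
    exact ⟨OrderIso.refl _⟩

end UpdateUniv

section Siblings

variable {ι : Type*} {A : ι → Type*} [∀ i, LinearOrder (A i)] [∀ i, Nonempty (A i)]

theorem exists_orderIso_univ_sigma_extendUniv (hfin : {i | Nontrivial (A i)}.Finite)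
    {S : Set (Σ i, A i)} (hS : Equimorphic S (Σ i, A i)) :
    ∃ T : ∀ i : {i // Nontrivial (A i)}, {T : Set (A i) // Equimorphic T (A i)},
      Nonempty (univ.sigma (extendUniv fun i => (T i).1) ≃o S) := by
  have (i : {i // (Sigma.mk i ⁻¹' S).Nonempty}) : Nonempty (Sigma.mk i.1 ⁻¹' S) :=
    i.2.to_subtype
  let eS := S.sigmaFiberOrderIso
  obtain ⟨G, hG⟩ := exists_equiv_forall_equimorphic hfin (hS.symm.trans eS.equimorphic)
  choose T hT using fun i : {i // Nontrivial (A i)} =>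
    exists_subset_equimorphic_orderIso (hG i).symm
  refine ⟨T, ⟨(univSigmaOrderIso _).trans
    ((OrderIso.sigmaCongr G fun i => ?_).trans eS.symm)⟩⟩
  by_cases hi : Nontrivial (A i)
  · exact (OrderIso.setCongr _ _ (extendUniv_of_nontrivial _ hi)).trans (hT ⟨i, hi⟩).some
  · have := not_nontrivial_iff_subsingleton.1 hi
    have := (hG i).2.some.injective.subsingleton
    exact (OrderIso.setCongr _ _ (extendUniv_of_not_nontrivial _ hi)).trans
      nonempty_orderIso_of_subsingleton.some

theorem sibNumber_sigma_le_prod (hfin : {i | Nontrivial (A i)}.Finite) :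
    sibNumber (Σ i, A i) ≤ prod fun i : {i // Nontrivial (A i)} => sibNumber (A i) := by
  let F (w : ∀ i : {i // Nontrivial (A i)}, Quotient (sibSetoid (A i))) :
      Quotient (sibSetoid (Σ i, A i)) :=
    ⟦⟨univ.sigma (extendUniv fun i => (w i).out.1),
      equimorphic_univ_sigma (nonempty_orderEmbedding_extendUniv fun i => (w i).out)⟩⟧
  refine (mk_le_of_surjective (f := F) fun q => ?_).trans_eq (mk_pi _)
  induction q using Quotient.inductionOn with | h S =>
  obtain ⟨T, ⟨e⟩⟩ := exists_orderIso_univ_sigma_extendUniv hfin S.2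
  refine ⟨fun i => ⟦T i⟧, Quotient.sound ?_⟩
  obtain ⟨e'⟩ := nonempty_orderIso_univ_sigma <| nonempty_orderIso_extendUniv fun i =>
    Quotient.mk_out (s := sibSetoid (A i)) (T i)
  exact ⟨e'.trans e⟩

theorem nonempty_orderIso_of_univ_sigma_update [DecidableEq ι]
    (hfin : {i | Nontrivial (A i)}.Finite) {i₀ : ι} [Nontrivial (A i₀)] {T T' : Set (A i₀)}
    (hT : Nonempty (A i₀ ↪o T)) (hT' : Nonempty (A i₀ ↪o T'))
    (e : univ.sigma (update (fun _ => Set.univ) i₀ T) ≃o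
      univ.sigma (update (fun _ => Set.univ) i₀ T')) :
    Nonempty (T ≃o T') := by
  have hne {T : Set (A i₀)} (hT : Nonempty (A i₀ ↪o T)) (i : ι) :
      Nonempty (update (fun _ => Set.univ) i₀ T i) :=
    ⟨(nonempty_orderEmbedding_update_univ hT i).some (Classical.arbitrary _)⟩
  have := hne hT
  have := hne hT'
  have : Nontrivial T := hT.some.injective.nontrivial
  obtain ⟨g, hg⟩ := ((univSigmaOrderIso _).symm.trans
    (e.trans (univSigmaOrderIso _))).exists_equiv_forall_nonempty_orderIso
  have hfin' : {i | Nonempty (update (fun _ => Set.univ) i₀ T i ≃o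
      update (fun _ => Set.univ) i₀ T i₀)}.Finite := by
    refine (hfin.insert i₀).subset fun i ⟨f⟩ => ?_
    rcases eq_or_ne i i₀ with rfl | hi
    · exact mem_insert _ _
    · rw [update_of_ne hi, update_self] at f
      exact Or.inr (f.symm.trans OrderIso.Set.univ).injective.nontrivial
  have := nonempty_orderIso_of_perm (B' := fun i => update (fun _ => Set.univ) i₀ T' i) g hg
    (i₀ := i₀) (fun i hi => by
      rw [update_of_ne hi, update_of_ne hi]
      exact ⟨OrderIso.refl _⟩) hfin'
  rwa [update_self, update_self] at this

theorem sibNumber_le_sibNumber_sigma {ι : Type u} {A : ι → Type v} [∀ i, LinearOrder (A i)]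
    [∀ i, Nonempty (A i)] (hfin : {i | Nontrivial (A i)}.Finite) (i₀ : ι)
    [Nontrivial (A i₀)] :
    lift.{u} (sibNumber (A i₀)) ≤ sibNumber (Σ i, A i) := by
  classical
  let φ (T : {T : Set (A i₀) // Equimorphic T (A i₀)}) :
      {S : Set (Σ i, A i) // Equimorphic S (Σ i, A i)} :=
    ⟨univ.sigma (update (fun _ => Set.univ) i₀ T.1),
      equimorphic_univ_sigma (nonempty_orderEmbedding_update_univ T.2.2)⟩
  let Φ : Quotient (sibSetoid (A i₀)) → Quotient (sibSetoid (Σ i, A i)) :=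
    Quotient.map (sa := sibSetoid _) (sb := sibSetoid _) φ fun _ _ h =>
      nonempty_orderIso_univ_sigma (nonempty_orderIso_update_univ h)
  have hΦ : Injective Φ := by
    rintro ⟨T⟩ ⟨T'⟩ h
    exact Quotient.sound
      (nonempty_orderIso_of_univ_sigma_update hfin T.2.2 T'.2.2 (Quotient.exact h).some)
  have := lift_mk_le_lift_mk_of_injective hΦ
  rwa [lift_umax, lift_id'.{v, u}] at this

end Siblings

theorem sib_aleph0_of_finitely_many_aleph0_components_general (k : ℕ) (hk : 0 < k) (J : Type)
    (C : Fin k ⊕ J → Type) [∀ i, LinearOrder (C i)] [∀ i, Nonempty (C i)]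
    (hC : ∀ i : Fin k, sibNumber (C (Sum.inl i)) = ℵ₀)
    (hNfin : {j : J | Nontrivial (C (Sum.inr j))}.Finite)
    (hNone : ∀ j : J, Nontrivial (C (Sum.inr j)) → sibNumber (C (Sum.inr j)) = 1) :
    sibNumber (Σ i, C i) = ℵ₀ := by
  have hfin : {i | Nontrivial (C i)}.Finite :=
    ((finite_range Sum.inl).union (hNfin.image Sum.inr)).subset <| by
      rintro (i | j) hi
      exacts [Or.inl ⟨i, rfl⟩, Or.inr ⟨j, hi, rfl⟩]
  have : Finite {i // Nontrivial (C i)} := hfin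
  have : Nontrivial (C (.inl ⟨0, hk⟩)) := nontrivial_of_aleph0_le_sibNumber (hC ⟨0, hk⟩).ge
  refine le_antisymm ((sibNumber_sigma_le_prod hfin).trans (prod_le_aleph0 ?_)) ?_
  · rintro ⟨i | j, hi⟩
    exacts [(hC i).le, (hNone j hi).trans_le one_le_aleph0]
  · have := sibNumber_le_sibNumber_sigma hfin (.inl ⟨0, hk⟩)
    rwa [lift_id, hC] at this

theorem sib_aleph0_of_finitely_many_aleph0_components (k : ℕ) (hk : 0 < k) (J : Type)
    (C : Fin k ⊕ J → Type) [∀ i, LinearOrder (C i)] [∀ i, Nonempty (C i)]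
    [Countable J] [∀ i, Countable (C i)]
    (hC : ∀ i : Fin k, sibNumber (C (Sum.inl i)) = ℵ₀)
    (hNfin : {j : J | Nontrivial (C (Sum.inr j))}.Finite)
    (hNone : ∀ j : J, Nontrivial (C (Sum.inr j)) → sibNumber (C (Sum.inr j)) = 1) :
    sibNumber (Σ i, C i) = ℵ₀ :=
  sib_aleph0_of_finitely_many_aleph0_components_general k hk J C hC hNfin hNone
end

section
/- Let D = ⊕_{i∈I} C_i ⊕ T be a direct sum of chains where T is the (nonempty) direct sum of the trivial components, |T| = λ > 0, and the C_i are the non-trivial components. Then there exist λ pairwise disjoint infinite increasing (under embeddability) sequences of non-trivial components of D if and only if D embeds into ⊕_{i∈I} C_i. In this case D has infinitely many siblings up to isomorphism. -/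
open Cardinal

/-!
Components of a direct sum of chains are connected and pairwise incomparable, so an embedding
`Σ i, A i ↪o Σ k, B k` of sums of nonempty chains amounts to an injective map `m` of indices
together with embeddings `A i ↪o B (m i)`. For an embedding of `D = (Σ i, C i) ⊕ T` into
`Σ i, C i`, the index map `φ` on `I` is injective and misses the components receiving the points
of `T`; the `φ`-orbits of those components are the required disjoint increasing sequences.
Conversely, shifting every sequence one step forward frees its first component, which receives
the corresponding point of `T`.

Interleaving a single such sequence yields `k` of them for every `k`, hence embeddings
`(Σ i, C i) ⊕ k ↪o Σ i, C i`, so all these structures are equimorphic with `D`. Since the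
components `C i` are nontrivial, the isolated points (elements both minimal and maximal) of
`(Σ i, C i) ⊕ k` are exactly the `k` added points, so these siblings are pairwise
non-isomorphic.
-/

universe v

open Function

namespace Sigma

variable {ι : Type*} {A : ι → Type*}

theorem fst_eq_of_le [∀ i, LE (A i)] {x y : Σ i, A i} (h : x ≤ y) : x.1 = y.1 :=
  (Sigma.le_def.mp h).1

theorem fst_eq_iff_le_or_le_s17 [∀ i, LinearOrder (A i)] {x y : Σ i, A i} :
    x.1 = y.1 ↔ x ≤ y ∨ y ≤ x := by
  obtain ⟨i, a⟩ := x
  obtain ⟨j, b⟩ := y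
  constructor
  · rintro (rfl : i = j)
    simpa only [Sigma.mk_le_mk_iff] using le_total a b
  · rintro (h | h)
    exacts [fst_eq_of_le h, (fst_eq_of_le h).symm]

theorem le_iff_of_fst_eq [∀ i, LE (A i)] {x y : Σ i, A i} {i : ι} (hx : x.1 = i)
    (hy : y.1 = i) : x ≤ y ↔ hx ▸ x.2 ≤ hy ▸ y.2 := by
  obtain ⟨j, a⟩ := x
  obtain ⟨j', b⟩ := y
  dsimp only at hx hy
  subst hx hy
  exact Sigma.mk_le_mk_iff

end Sigma

namespace OrderEmbedding

variable {α β γ : Type*} {ι κ : Type*} {A : ι → Type*} {B : κ → Type*}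

@[simps]
def sumInl [LE α] [LE β] : α ↪o α ⊕ β where
  toFun := Sum.inl
  inj' := Sum.inl_injective
  map_rel_iff' := Sum.inl_le_inl_iff

def sumElim [Preorder α] [Preorder β] [Preorder γ] (f : α ↪o γ) (g : β ↪o γ)
    (hfg : ∀ a b, ¬f a ≤ g b ∧ ¬g b ≤ f a) : α ⊕ β ↪o γ where
  toFun := Sum.elim f g
  inj' := by
    rintro (a | b) (a' | b') h
    · exact congrArg Sum.inl (f.injective h)
    · exact ((hfg a b').1 (le_of_eq h)).elim
    · exact ((hfg a' b).2 (le_of_eq h)).elim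
    · exact congrArg Sum.inr (g.injective h)
  map_rel_iff' {x y} := by
    change Sum.elim f g x ≤ Sum.elim f g y ↔ x ≤ y
    rcases x with a | b <;> rcases y with a' | b' <;> simp [hfg]

def sigmaMap_s17 [∀ i, LE (A i)] [∀ k, LE (B k)] (m : ι → κ) (hm : Injective m)
    (f : ∀ i, A i ↪o B (m i)) : (Σ i, A i) ↪o Σ k, B k where
  toFun := Sigma.map m fun i => f i
  inj' := hm.sigma_map fun i => (f i).injective
  map_rel_iff' := by
    rintro ⟨i, a⟩ ⟨j, b⟩
    constructor
    · intro h
      obtain rfl : i = j := hm (Sigma.fst_eq_of_le h)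
      simpa [Sigma.map, (f i).map_rel_iff] using h
    · intro h
      obtain rfl : i = j := Sigma.fst_eq_of_le h
      simpa [Sigma.map, (f i).map_rel_iff] using h

variable [∀ k, LinearOrder (B k)]

theorem fst_apply_eq_iff [Preorder α] (e : α ↪o Σ k, B k) {x y : α} :
    (e x).1 = (e y).1 ↔ x ≤ y ∨ y ≤ x := by
  rw [Sigma.fst_eq_iff_le_or_le_s17, e.le_iff_le, e.le_iff_le]

theorem nonempty_of_forall_fst_eq [PartialOrder α] (f : α ↪o Σ k, B k) {k : κ}
    (hf : ∀ x, (f x).1 = k) : Nonempty (α ↪o B k) :=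
  ⟨OrderEmbedding.ofMapLEIff (fun x => hf x ▸ (f x).2) fun x y => by
    rw [← f.le_iff_le, Sigma.le_iff_of_fst_eq (hf x) (hf y)]⟩

theorem exists_sigmaMap_decomposition [∀ i, LinearOrder (A i)] [∀ i, Nonempty (A i)]
    (e : (Σ i, A i) ↪o Σ k, B k) :
    ∃ m : ι → κ, Injective m ∧ (∀ x, (e x).1 = m x.1) ∧
      ∀ i, Nonempty (A i ↪o B (m i)) := by
  let m : ι → κ := fun i => (e ⟨i, Classical.arbitrary _⟩).1
  have hm : ∀ x, (e x).1 = m x.1 := fun ⟨i, _⟩ =>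
    e.fst_apply_eq_iff.2 (Sigma.fst_eq_iff_le_or_le_s17.1 rfl)
  refine ⟨m, fun i j h => Sigma.fst_eq_iff_le_or_le_s17.2 (e.fst_apply_eq_iff.1 h), hm, fun i => ?_⟩
  let mk : A i ↪o Σ i, A i := ⟨⟨Sigma.mk i, sigma_mk_injective⟩, Sigma.mk_le_mk_iff⟩
  exact nonempty_of_forall_fst_eq (mk.trans e) fun a => hm ⟨i, a⟩

end OrderEmbedding

namespace Function

variable {α β : Type*}

theorem iterate_eq_iterate_of_notMem_range {φ : α → α} (hφ : Injective φ) {x y : α}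
    (hx : x ∉ Set.range φ) (hy : y ∉ Set.range φ) {m n : ℕ} (h : φ^[m] x = φ^[n] y) :
    m = n ∧ x = y := by
  induction m generalizing n with
  | zero =>
    cases n with
    | zero => exact ⟨rfl, h⟩
    | succ n => exact (hx ⟨φ^[n] y, (iterate_succ_apply' φ n y).symm.trans h.symm⟩).elim
  | succ m ih =>
    cases n with
    | zero => exact (hy ⟨φ^[m] x, (iterate_succ_apply' φ m x).symm.trans h⟩).elim
    | succ n =>
      rw [iterate_succ_apply', iterate_succ_apply'] at h
      obtain ⟨rfl, hxy⟩ := ih (hφ h)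
      exact ⟨rfl, hxy⟩

theorem Injective.iterate_apply_injective {φ : α → α} (hφ : Injective φ) {a : β → α}
    (ha : Injective a) (hφa : ∀ b, a b ∉ Set.range φ) :
    Injective fun p : β × ℕ => φ^[p.2] (a p.1) := fun ⟨b, _⟩ ⟨b', _⟩ h =>
  let ⟨hmn, hab⟩ := iterate_eq_iterate_of_notMem_range hφ (hφa b) (hφa b') h
  Prod.ext (ha hab) hmn

noncomputable def shiftAlong (G : β × ℕ → α) : α → α :=
  extend G (fun p => G (p.1, p.2 + 1)) id

variable {G : β × ℕ → α}

theorem Injective.shiftAlong_apply (hG : Injective G) (p : β × ℕ) :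
    shiftAlong G (G p) = G (p.1, p.2 + 1) :=
  hG.extend_apply _ _ p

theorem shiftAlong_apply_of_notMem_range {x : α} (hx : x ∉ Set.range G) : shiftAlong G x = x :=
  extend_apply' _ _ _ hx

theorem Injective.shiftAlong_injective (hG : Injective G) : Injective (shiftAlong G) := by
  intro x y h
  by_cases hx : x ∈ Set.range G <;> by_cases hy : y ∈ Set.range G
  · obtain ⟨p, rfl⟩ := hx
    obtain ⟨q, rfl⟩ := hy
    rw [hG.shiftAlong_apply, hG.shiftAlong_apply] at h
    obtain ⟨h₁, h₂⟩ := Prod.ext_iff.1 (hG h)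
    exact congrArg G (Prod.ext h₁ (Nat.add_right_cancel h₂))
  · obtain ⟨p, rfl⟩ := hx
    rw [hG.shiftAlong_apply, shiftAlong_apply_of_notMem_range hy] at h
    exact (hy ⟨_, h⟩).elim
  · obtain ⟨q, rfl⟩ := hy
    rw [hG.shiftAlong_apply, shiftAlong_apply_of_notMem_range hx] at h
    exact (hx ⟨_, h.symm⟩).elim
  · rwa [shiftAlong_apply_of_notMem_range hx, shiftAlong_apply_of_notMem_range hy] at h

theorem Injective.apply_zero_notMem_range_shiftAlong (hG : Injective G) (b : β) :
    G (b, 0) ∉ Set.range (shiftAlong G) := by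
  rintro ⟨x, hx⟩
  by_cases hxG : x ∈ Set.range G
  · obtain ⟨p, rfl⟩ := hxG
    rw [hG.shiftAlong_apply] at hx
    exact Nat.succ_ne_zero _ (congrArg Prod.snd (hG hx))
  · rw [shiftAlong_apply_of_notMem_range hxG] at hx
    exact hxG ⟨_, hx.symm⟩

end Function

open Function

theorem nonempty_orderEmbedding_of_le {X : ℕ → Type*} [∀ n, Preorder (X n)]
    (hX : ∀ n, Nonempty (X n ↪o X (n + 1))) {a b : ℕ} (hab : a ≤ b) :
    Nonempty (X a ↪o X b) := by
  induction b, hab using Nat.le_induction with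
  | base => exact ⟨RelEmbedding.refl _⟩
  | succ b _ ih => exact ⟨ih.some.trans (hX b).some⟩

section DirectSumOfChains

variable {I : Type*} (C : I → Type*) [∀ i, LinearOrder (C i)] (T : Type*)

def HasDisjointIncreasingSeqs : Prop :=
  ∃ g : T → ℕ → I, Injective (fun p : T × ℕ => g p.1 p.2) ∧
    ∀ (t : T) (n : ℕ), Nonempty (C (g t n) ↪o C (g t (n + 1)))

variable {C T} [∀ i, Nonempty (C i)]

theorem HasDisjointIncreasingSeqs.of_orderEmbedding
    (e : (Σ i, C i) ⊕ (Σ _ : T, PUnit.{v + 1}) ↪o Σ i, C i) :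
    HasDisjointIncreasingSeqs C T := by
  obtain ⟨φ, hφ, hφe, hφC⟩ :=
    OrderEmbedding.exists_sigmaMap_decomposition (OrderEmbedding.sumInl.trans e)
  let a : T → I := fun t => (e (.inr ⟨t, .unit⟩)).1
  have ha : Injective a := fun t t' h =>
    Sigma.fst_eq_iff_le_or_le_s17.2 (by simpa using e.fst_apply_eq_iff.1 h)
  have hφa : ∀ t, a t ∉ Set.range φ := by
    rintro t ⟨i, hi⟩
    rw [← hφe ⟨i, Classical.arbitrary _⟩] at hi
    simpa using e.fst_apply_eq_iff.1 hi
  refine ⟨fun t n => φ^[n] (a t), hφ.iterate_apply_injective ha hφa, fun t n => ?_⟩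
  show Nonempty (C (φ^[n] (a t)) ↪o C (φ^[n + 1] (a t)))
  rw [iterate_succ_apply']
  exact hφC _

theorem HasDisjointIncreasingSeqs.nonempty_orderEmbedding (h : HasDisjointIncreasingSeqs C T) :
    Nonempty ((Σ i, C i) ⊕ (Σ _ : T, PUnit.{v + 1}) ↪o Σ i, C i) := by
  obtain ⟨g, hg, hgC⟩ := h
  let G : T × ℕ → I := fun p => g p.1 p.2
  have hC : ∀ i, Nonempty (C i ↪o C (shiftAlong G i)) := by
    intro i
    by_cases hi : i ∈ Set.range G
    · obtain ⟨⟨t, n⟩, rfl⟩ := hi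
      rw [hg.shiftAlong_apply]
      exact hgC t n
    · rw [shiftAlong_apply_of_notMem_range hi]
      exact ⟨RelEmbedding.refl _⟩
  have hg₀ : Injective fun t => g t 0 := fun t t' h =>
    congrArg Prod.fst (hg (a₁ := (t, 0)) (a₂ := (t', 0)) h)
  let point : ∀ t, PUnit.{v + 1} ↪o C (g t 0) := fun t =>
    OrderEmbedding.ofMapLEIff (fun _ => Classical.arbitrary _) fun _ _ => iff_of_true le_rfl trivial
  refine ⟨OrderEmbedding.sumElim (.sigmaMap _ hg.shiftAlong_injective fun i => (hC i).some)
    (.sigmaMap _ hg₀ point) fun x y => ?_⟩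
  have hne : shiftAlong G x.1 ≠ G (y.1, 0) := fun h =>
    hg.apply_zero_notMem_range_shiftAlong y.1 ⟨x.1, h⟩
  exact ⟨fun h => hne (Sigma.fst_eq_of_le h), fun h => hne (Sigma.fst_eq_of_le h).symm⟩

theorem hasDisjointIncreasingSeqs_iff :
    HasDisjointIncreasingSeqs C T ↔
      Nonempty ((Σ i, C i) ⊕ (Σ _ : T, PUnit.{v + 1}) ↪o Σ i, C i) :=
  ⟨fun h => h.nonempty_orderEmbedding, fun ⟨e⟩ => .of_orderEmbedding e⟩

end DirectSumOfChains

theorem aleph0_le_sibNumber {α : Type*} [Preorder α] (E : ℕ → Type*) [∀ n, Preorder (E n)]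
    (hE : ∀ n, Equimorphic (E n) α) (hE_iso : ∀ m n, Nonempty (E m ≃o E n) → m = n) :
    ℵ₀ ≤ sibNumber α := by
  let f := fun n => (hE n).1.some
  let S : ℕ → {S : Set α // Equimorphic S α} := fun n =>
    ⟨Set.range (f n), ⟨OrderEmbedding.subtype _⟩,
      ⟨(hE n).2.some.trans (f n).orderIso.toOrderEmbedding⟩⟩
  have hS : Injective fun n => Quotient.mk (sibSetoid α) (S n) := fun m n h =>
    let ⟨e⟩ := Quotient.exact h
    hE_iso m n ⟨(f m).orderIso.trans (e.trans (f n).orderIso.symm)⟩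
  exact Cardinal.infinite_iff.mp (Infinite.of_injective _ hS)

def OrderIso.isMinIsMaxEquiv {α β : Type*} [Preorder α] [Preorder β] (f : α ≃o β) :
    {x : α // IsMin x ∧ IsMax x} ≃ {y : β // IsMin y ∧ IsMax y} :=
  f.toEquiv.subtypeEquiv fun _ => by simp [f.isMin_apply, f.isMax_apply]

section Isolated

variable {I : Type*} {C : I → Type*} [∀ i, LinearOrder (C i)] [∀ i, Nontrivial (C i)]
  {T : Type*}

theorem isMin_and_isMax_iff_isRight {x : (Σ i, C i) ⊕ (Σ _ : T, PUnit.{v + 1})} :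
    IsMin x ∧ IsMax x ↔ x.isRight := by
  rcases x with ⟨i, a⟩ | ⟨t, ⟨⟩⟩
  · simp only [Sum.isRight_inl, Bool.false_eq_true, iff_false, not_and]
    intro hmin hmax
    obtain ⟨b, hb⟩ := exists_ne a
    rcases le_total a b with h | h
    · exact hb (le_antisymm (by simpa using hmax (b := .inl ⟨i, b⟩) (by simpa using h)) h)
    · exact hb (le_antisymm h (by simpa using hmin (b := .inl ⟨i, b⟩) (by simpa using h)))
  · have hle : ∀ y, y ≤ (.inr ⟨t, .unit⟩ : (Σ i, C i) ⊕ (Σ _ : T, PUnit.{v + 1})) ∨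
        .inr ⟨t, .unit⟩ ≤ y → y = .inr ⟨t, .unit⟩ := by
      rintro (y | ⟨t', ⟨⟩⟩) hy
      · simp at hy
      · obtain rfl : t' = t := Sigma.fst_eq_iff_le_or_le_s17.2 (by simpa using hy)
        rfl
    simp only [Sum.isRight_inr, iff_true]
    exact ⟨fun y hy => (hle y (.inl hy)).ge, fun y hy => (hle y (.inr hy)).le⟩

def isMinIsMaxSumSigmaEquiv :
    {x : (Σ i, C i) ⊕ (Σ _ : T, PUnit.{v + 1}) // IsMin x ∧ IsMax x} ≃ T :=
  (Equiv.subtypeEquivRight fun _ => isMin_and_isMax_iff_isRight).trans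
    (Equiv.sumIsRight.trans (Equiv.sigmaPUnit T))

end Isolated

section Siblings

variable {I : Type*} {C : I → Type*} [∀ i, LinearOrder (C i)] {T : Type*} [Nonempty T]

theorem HasDisjointIncreasingSeqs.fin (h : HasDisjointIncreasingSeqs C T) (k : ℕ) :
    HasDisjointIncreasingSeqs C (Fin k) := by
  obtain ⟨g, hg, hgC⟩ := h
  obtain ⟨t⟩ := ‹Nonempty T›
  refine ⟨fun j n => g t (j + n * k), fun ⟨j, n⟩ ⟨j', n'⟩ h => ?_, fun j n => ?_⟩
  · have hk : 0 < k := j.pos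
    have h' : (j : ℕ) + n * k = j' + n' * k :=
      congrArg Prod.snd (hg (a₁ := (t, _)) (a₂ := (t, _)) h)
    have hj : (j : ℕ) = j' := by
      simpa [Nat.mod_eq_of_lt j.2, Nat.mod_eq_of_lt j'.2] using congrArg (· % k) h'
    have hn : n = n' := by
      simpa [Nat.add_mul_div_right _ _ hk, Nat.div_eq_of_lt j.2, Nat.div_eq_of_lt j'.2] using
        congrArg (· / k) h'
    exact Prod.ext (Fin.ext hj) hn
  · exact nonempty_orderEmbedding_of_le (X := fun n => C (g t n)) (hgC t)
      (by rw [Nat.succ_mul]; omega)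

theorem HasDisjointIncreasingSeqs.aleph0_le_sibNumber [∀ i, Nontrivial (C i)]
    (h : HasDisjointIncreasingSeqs C T) :
    ℵ₀ ≤ sibNumber ((Σ i, C i) ⊕ (Σ _ : T, PUnit.{v + 1})) := by
  refine _root_.aleph0_le_sibNumber (fun k => (Σ i, C i) ⊕ (Σ _ : Fin k, PUnit.{v + 1}))
    (fun k => ⟨?_, ?_⟩) fun m n ⟨f⟩ => ?_
  · exact ⟨(h.fin k).nonempty_orderEmbedding.some.trans OrderEmbedding.sumInl⟩
  · exact ⟨h.nonempty_orderEmbedding.some.trans OrderEmbedding.sumInl⟩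
  · exact Fin.equiv_iff_eq.1
      ⟨isMinIsMaxSumSigmaEquiv.symm.trans (f.isMinIsMaxEquiv.trans isMinIsMaxSumSigmaEquiv)⟩

end Siblings

theorem pairwise_disjoint_increasing_iff_embeds (I T : Type) (C : I → Type)
    [∀ i, LinearOrder (C i)] [∀ i, Nonempty (C i)] [∀ i, Nontrivial (C i)]
    (hT : Nonempty T) :
    ((∃ g : T → ℕ → I,
        Function.Injective (fun p : T × ℕ => g p.1 p.2) ∧
        ∀ (t : T) (n : ℕ), Nonempty (C (g t n) ↪o C (g t (n + 1)))) ↔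
      Nonempty (((Σ i, C i) ⊕ (Σ _ : T, PUnit)) ↪o Σ i, C i)) ∧
    (Nonempty (((Σ i, C i) ⊕ (Σ _ : T, PUnit)) ↪o Σ i, C i) →
      ℵ₀ ≤ sibNumber ((Σ i, C i) ⊕ (Σ _ : T, PUnit))) :=
  ⟨hasDisjointIncreasingSeqs_iff, fun ⟨e⟩ =>
    (HasDisjointIncreasingSeqs.of_orderEmbedding e).aleph0_le_sibNumber⟩
end

section
/- Let D be a direct sum of chains (of any cardinality) such that there is no infinite increasing (under embeddability) sequence of non-trivial components and every component of D has exactly one sibling up to isomorphism. Then D has exactly one sibling up to isomorphism. -/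
/-!
An order embedding between direct sums of nonempty chains sends each component into a single
component, and distinct components into distinct ones. So a sibling `S` of `D = Σ i, C i`, split
into its nonempty fibres `S j`, yields injections `σ`, `τ` between the index sets with
`C i ↪ S (σ i)` and `S j ↪ C (τ j)`. Follow the orbit of `i` under `τ ∘ σ`: if it is periodic,
the embeddings come back to `C i`, so `S (σ i)` is equimorphic to `C i` and `Sib (C i) = 1` makes
them isomorphic; otherwise the orbit is an injective increasing sequence of components, which by
hypothesis consists of singletons. The same holds for `S j` and `C (τ j)`, and the
Schröder–Bernstein theorem, applied to the relation "isomorphic components", matches the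
components of `D` and `S` bijectively and isomorphically.
-/

open Cardinal

open Function

lemma Equimorphic.of_orderIso {α β : Type*} [Preorder α] [Preorder β] (e : α ≃o β) :
    Equimorphic α β :=
  ⟨⟨e.toOrderEmbedding⟩, ⟨e.symm.toOrderEmbedding⟩⟩

lemma sibNumber_eq_one_iff {α : Type*} [Preorder α] :
    sibNumber α = 1 ↔ ∀ S : Set α, Equimorphic S α → Nonempty (S ≃o α) := by
  let univ : {S : Set α // Equimorphic S α} := ⟨Set.univ, .of_orderIso OrderIso.Set.univ⟩
  rw [sibNumber, Cardinal.eq_one_iff_unique, and_iff_left ⟨⟦univ⟧⟩]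
  constructor
  · intro hsub S hS
    obtain ⟨e⟩ := Quotient.exact (Subsingleton.elim (⟦⟨S, hS⟩⟧ : Quotient (sibSetoid α)) ⟦univ⟧)
    exact ⟨e.trans OrderIso.Set.univ⟩
  · intro h
    constructor
    rintro ⟨S, hS⟩ ⟨T, hT⟩
    obtain ⟨eS⟩ := h S hS
    obtain ⟨eT⟩ := h T hT
    exact Quotient.sound ⟨eS.trans eT.symm⟩

lemma nonempty_orderIso_of_sibNumber_eq_one {α β : Type*} [Preorder α] [Preorder β]
    (h : sibNumber α = 1) (f : α ↪o β) (g : β ↪o α) : Nonempty (β ≃o α) := by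
  have hrange : Equimorphic (Set.range g) α :=
    ⟨⟨OrderEmbedding.subtype _⟩, ⟨f.trans g.orderIso.toOrderEmbedding⟩⟩
  obtain ⟨e⟩ := sibNumber_eq_one_iff.1 h _ hrange
  exact ⟨g.orderIso.trans e⟩

lemma OrderIso.nonempty_of_subsingleton {α β : Type*} [Preorder α] [Preorder β]
    [Subsingleton α] [Subsingleton β] [Nonempty α] [Nonempty β] : Nonempty (α ≃o β) := by
  obtain ⟨a⟩ := ‹Nonempty α›
  obtain ⟨b⟩ := ‹Nonempty β›
  let := uniqueOfSubsingleton a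
  let := uniqueOfSubsingleton b
  exact ⟨OrderIso.ofUnique α β⟩

lemma Function.Injective.injective_iterate_of_notMem_periodicPts {α : Type*} {f : α → α}
    (hf : Injective f) {x : α} (hx : x ∉ periodicPts f) : Injective (f^[·] x) := by
  intro m n hmn
  by_contra hne
  rcases lt_or_gt_of_ne hne with hlt | hlt
  · exact hx (mk_mem_periodicPts (by lia) (iterate_cancel hf hmn.symm))
  · exact hx (mk_mem_periodicPts (by lia) (iterate_cancel hf hmn))

lemma Function.Semiconj.mem_periodicPts_of_apply {α β : Type*} {g : α → β} {fa : α → α}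
    {fb : β → β} (h : Semiconj g fa fb) (hg : Injective g) {x : α}
    (hx : g x ∈ periodicPts fb) : x ∈ periodicPts fa := by
  obtain ⟨n, hn, hper⟩ := mem_periodicPts.1 hx
  refine mk_mem_periodicPts hn (hg ?_)
  rw [IsPeriodicPt, IsFixedPt, ← (h.iterate_right n).eq] at hper
  exact hper

def HasIncreasingNontrivialSeq {ι : Type*} (A : ι → Type*) [∀ i, Preorder (A i)] : Prop :=
  ∃ g : ℕ → ι, Injective g ∧ (∀ n, Nontrivial (A (g n))) ∧
    ∀ n, Nonempty (A (g n) ↪o A (g (n + 1)))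

section Chains

variable {ι : Type*} {A : ι → Type*} [∀ i, Preorder (A i)] {ρ : ι → ι}

lemma nonempty_orderEmbedding_iterate (step : ∀ i, A i ↪o A (ρ i)) (n : ℕ) (i : ι) :
    Nonempty (A i ↪o A (ρ^[n] i)) := by
  induction n with
  | zero => exact ⟨RelEmbedding.refl _⟩
  | succ n ih =>
    obtain ⟨e⟩ := ih
    rw [iterate_succ_apply']
    exact ⟨e.trans (step _)⟩

lemma subsingleton_of_notMem_periodicPts (hA : ¬ HasIncreasingNontrivialSeq A)
    (hρ : Injective ρ) (step : ∀ i, A i ↪o A (ρ i)) {i : ι} (hi : i ∉ periodicPts ρ) :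
    Subsingleton (A i) := by
  by_contra hsub
  have : Nontrivial (A i) := not_subsingleton_iff_nontrivial.1 hsub
  refine hA ⟨(ρ^[·] i), hρ.injective_iterate_of_notMem_periodicPts hi, fun n => ?_, fun n => ?_⟩
  · obtain ⟨e⟩ := nonempty_orderEmbedding_iterate step n i
    exact e.injective.nontrivial
  · show Nonempty (A (ρ^[n] i) ↪o A (ρ^[n + 1] i))
    rw [iterate_succ_apply']
    exact ⟨step _⟩

end Chains

section Components

variable {ι κ : Type*} {A : ι → Type*} {B : κ → Type*} [∀ i, Preorder (A i)]
  [∀ k, Preorder (B k)] {σ : ι → κ} {τ : κ → ι}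

lemma nonempty_orderEmbedding_of_mem_periodicPts (u : ∀ i, A i ↪o B (σ i))
    (v : ∀ k, B k ↪o A (τ k)) {i : ι} (hi : i ∈ periodicPts (τ ∘ σ)) :
    Nonempty (B (σ i) ↪o A i) := by
  obtain ⟨n, hn, hper⟩ := mem_periodicPts.1 hi
  obtain ⟨e⟩ := nonempty_orderEmbedding_iterate (ρ := τ ∘ σ) (fun i => (u i).trans (v (σ i)))
    (n - 1) (τ (σ i))
  have hreturn : (τ ∘ σ)^[n - 1] (τ (σ i)) = i := by
    rw [← comp_apply (f := τ), ← iterate_succ_apply, Nat.succ_eq_add_one, Nat.sub_add_cancel hn]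
    exact hper
  rw [hreturn] at e
  exact ⟨(v (σ i)).trans e⟩

variable [∀ i, Nonempty (A i)] [∀ k, Nonempty (B k)] (hσ : Injective σ) (hτ : Injective τ)
  (u : ∀ i, A i ↪o B (σ i)) (v : ∀ k, B k ↪o A (τ k))
  (hA : ¬ HasIncreasingNontrivialSeq A) (hsib : ∀ i, sibNumber (A i) = 1)
include hσ hτ u v hA hsib

lemma nonempty_orderIso_apply_left (i : ι) : Nonempty (A i ≃o B (σ i)) := by
  by_cases hi : i ∈ periodicPts (τ ∘ σ)
  · obtain ⟨e⟩ := nonempty_orderEmbedding_of_mem_periodicPts u v hi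
    exact (nonempty_orderIso_of_sibNumber_eq_one (hsib i) (u i) e).map OrderIso.symm
  · have hi' : τ (σ i) ∉ periodicPts (τ ∘ σ) := fun h =>
      hi ((Function.Commute.refl (τ ∘ σ)).mem_periodicPts_of_apply (hτ.comp hσ) h)
    have : Subsingleton (A (τ (σ i))) :=
      subsingleton_of_notMem_periodicPts hA (hτ.comp hσ) (fun i => (u i).trans (v (σ i))) hi'
    have : Subsingleton (B (σ i)) := (v (σ i)).injective.subsingleton
    have : Subsingleton (A i) := (u i).injective.subsingleton
    exact OrderIso.nonempty_of_subsingleton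

lemma nonempty_orderIso_apply_right (k : κ) : Nonempty (A (τ k) ≃o B k) := by
  by_cases hk : k ∈ periodicPts (σ ∘ τ)
  · obtain ⟨e⟩ := nonempty_orderEmbedding_of_mem_periodicPts v u hk
    exact (nonempty_orderIso_of_sibNumber_eq_one (hsib (τ k)) e (v k)).map OrderIso.symm
  · have hk' : τ k ∉ periodicPts (τ ∘ σ) := fun h =>
      hk ((show Semiconj τ (σ ∘ τ) (τ ∘ σ) from fun _ => rfl).mem_periodicPts_of_apply hτ h)
    have : Subsingleton (A (τ k)) :=
      subsingleton_of_notMem_periodicPts hA (hτ.comp hσ) (fun i => (u i).trans (v (σ i))) hk'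
    have : Subsingleton (B k) := (v k).injective.subsingleton
    exact OrderIso.nonempty_of_subsingleton

end Components

namespace Sigma

variable {ι κ : Type*} {A : ι → Type*} {B : κ → Type*}

lemma fst_eq_of_le_s18 [∀ i, LE (A i)] {p q : Σ i, A i} (h : p ≤ q) : p.1 = q.1 :=
  (le_def.1 h).1

lemma le_total_of_fst_eq [∀ i, LinearOrder (A i)] {p q : Σ i, A i} (h : p.1 = q.1) :
    p ≤ q ∨ q ≤ p := by
  obtain ⟨i, a⟩ := p
  obtain ⟨j, b⟩ := q
  obtain rfl : i = j := h
  simpa only [mk_le_mk_iff] using le_total a b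

lemma mk_fst_cast_snd (p : Σ i, A i) {i : ι} (h : p.1 = i) : (⟨i, h ▸ p.2⟩ : Σ i, A i) = p := by
  subst h
  rfl

def orderEmbeddingMk [∀ i, Preorder (A i)] (i : ι) : A i ↪o Σ i, A i where
  toEmbedding := Function.Embedding.sigmaMk i
  map_rel_iff' := mk_le_mk_iff

def orderEmbeddingOfFstEq {X : Type*} [PartialOrder X] [∀ i, Preorder (A i)]
    (f : X ↪o Σ i, A i) (i : ι) (hf : ∀ x, (f x).1 = i) : X ↪o A i :=
  OrderEmbedding.ofMapLEIff (fun x => hf x ▸ (f x).2) fun x y => by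
    rw [← mk_le_mk_iff (i := i), mk_fst_cast_snd, mk_fst_cast_snd, f.le_iff_le]

def orderEmbeddingMap [∀ i, Preorder (A i)] [∀ k, Preorder (B k)] (e : ι ↪ κ)
    (F : ∀ i, A i ↪o B (e i)) : (Σ i, A i) ↪o Σ k, B k where
  toEmbedding := e.sigmaMap fun i => (F i).toEmbedding
  map_rel_iff' := by
    rintro ⟨i, a⟩ ⟨j, b⟩
    refine ⟨fun h => ?_, fun h => ?_⟩
    · obtain rfl : i = j := e.injective (fst_eq_of_le_s18 h)
      exact mk_le_mk_iff.2 ((F i).le_iff_le.1 (mk_le_mk_iff.1 h))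
    · obtain rfl : i = j := fst_eq_of_le_s18 h
      exact mk_le_mk_iff.2 ((F i).le_iff_le.2 (mk_le_mk_iff.1 h))

noncomputable def orderIsoCongr [∀ i, Preorder (A i)] [∀ k, Preorder (B k)] (e : ι ≃ κ)
    (F : ∀ i, A i ≃o B (e i)) : (Σ i, A i) ≃o Σ k, B k :=
  OrderIso.ofSurjective (orderEmbeddingMap e.toEmbedding fun i => (F i).toOrderEmbedding) <| by
    rintro ⟨k, b⟩
    obtain ⟨i, rfl⟩ := e.surjective k
    exact ⟨⟨i, (F i).symm b⟩, by simp [orderEmbeddingMap, Sigma.map]⟩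

lemma exists_injective_orderEmbedding_fiber [∀ i, LinearOrder (A i)] [∀ i, Nonempty (A i)]
    [∀ k, LinearOrder (B k)] (f : (Σ i, A i) ↪o Σ k, B k) :
    ∃ σ : ι → κ, Injective σ ∧ ∀ i, Nonempty (A i ↪o B (σ i)) := by
  have hfst (i : ι) (x y : A i) : (f ⟨i, x⟩).1 = (f ⟨i, y⟩).1 := by
    rcases le_total x y with h | h
    · exact fst_eq_of_le_s18 (f.monotone (mk_le_mk_iff.2 h))
    · exact (fst_eq_of_le_s18 (f.monotone (mk_le_mk_iff.2 h))).symm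
  refine ⟨fun i => (f ⟨i, Classical.arbitrary _⟩).1, fun i j hij => ?_, fun i =>
    ⟨orderEmbeddingOfFstEq ((orderEmbeddingMk i).trans f) _ fun x => hfst i x _⟩⟩
  rcases le_total_of_fst_eq hij with h | h
  · exact fst_eq_of_le_s18 (f.le_iff_le.1 h)
  · exact (fst_eq_of_le_s18 (f.le_iff_le.1 h)).symm

noncomputable def subtypeOrderIsoSigmaFibers [∀ i, Preorder (A i)] (S : Set (Σ i, A i)) :
    S ≃o Σ j : {i // ∃ x, (⟨i, x⟩ : Σ i, A i) ∈ S}, {x : A j // ⟨j, x⟩ ∈ S} :=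
  let emb := orderEmbeddingMap (Function.Embedding.subtype _) fun j =>
    OrderEmbedding.subtype fun x : A j => (⟨j, x⟩ : Σ i, A i) ∈ S
  have hrange : S = Set.range emb := by
    ext ⟨i, x⟩
    refine ⟨fun hx => ⟨⟨⟨i, x, hx⟩, x, hx⟩, rfl⟩, ?_⟩
    rintro ⟨⟨⟨j, hj⟩, y, hy⟩, h⟩
    cases h
    exact hy
  (OrderIso.setCongr _ _ hrange).trans emb.orderIso.symm

instance [∀ i, Preorder (A i)] (S : Set (Σ i, A i)) (j : {i // ∃ x, (⟨i, x⟩ : Σ i, A i) ∈ S}) :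
    Nonempty {x : A j // ⟨j, x⟩ ∈ S} :=
  j.2.elim fun x hx => ⟨⟨x, hx⟩⟩

theorem nonempty_orderIso_of_equimorphic [∀ i, LinearOrder (A i)] [∀ k, LinearOrder (B k)]
    [∀ i, Nonempty (A i)] [∀ k, Nonempty (B k)] (hA : ¬ HasIncreasingNontrivialSeq A)
    (hsib : ∀ i, sibNumber (A i) = 1) (h : Equimorphic (Σ i, A i) (Σ k, B k)) :
    Nonempty ((Σ i, A i) ≃o Σ k, B k) := by
  obtain ⟨⟨f⟩, ⟨g⟩⟩ := h
  obtain ⟨σ, hσ, hu⟩ := exists_injective_orderEmbedding_fiber f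
  obtain ⟨τ, hτ, hv⟩ := exists_injective_orderEmbedding_fiber g
  have u := fun i => (hu i).some
  have v := fun k => (hv k).some
  obtain ⟨e, he, hiso⟩ := Embedding.schroeder_bernstein_of_rel hσ hτ
    (fun i k => Nonempty (A i ≃o B k)) (nonempty_orderIso_apply_left hσ hτ u v hA hsib)
    (nonempty_orderIso_apply_right hσ hτ u v hA hsib)
  exact ⟨orderIsoCongr (Equiv.ofBijective e he) fun i => (hiso i).some⟩

end Sigma

theorem sib_one_of_no_increasing_sequence (I : Type) (C : I → Type)
    [∀ i, LinearOrder (C i)] [∀ i, Nonempty (C i)]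
    (hno : ¬ ∃ g : ℕ → I, Function.Injective g ∧ (∀ n, Nontrivial (C (g n))) ∧
        ∀ n, Nonempty (C (g n) ↪o C (g (n + 1))))
    (hone : ∀ i, sibNumber (C i) = 1) :
    sibNumber (Σ i, C i) = 1 := by
  rw [sibNumber_eq_one_iff]
  rintro S ⟨⟨g⟩, ⟨f⟩⟩
  let e := Sigma.subtypeOrderIsoSigmaFibers S
  obtain ⟨e'⟩ := Sigma.nonempty_orderIso_of_equimorphic hno hone
    ⟨⟨f.trans e.toOrderEmbedding⟩, ⟨e.symm.toOrderEmbedding.trans g⟩⟩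
  exact ⟨e.trans e'.symm⟩
end
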